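/- Let L, g : {a,…,b-1} × ℝ × ℝ → ℝ be C¹ in the last two variables, with a < b integers. For y : {a,…,b} → ℝ define Δy(t) = y(t+1) - y(t), J(y) = ∑_{t=a}^{b-1} L(t, y(t+1), Δy(t)), and I(y) = ∑_{t=a}^{b-1} g(t, y(t+1), Δy(t)). Suppose y⋆ is a local minimizer of J among sequences with y(a) = y_a, y(b) = y_b, and I(y) = l, and suppose y⋆ is not an extremal of I, i.e., t ↦ g_v(t, y⋆(t+1), Δy⋆(t)) - ∑_{τ=a}^{t-1} g_x(τ, y⋆(τ+1), Δy⋆(τ)) is not constant on {a,…,b-1}. Then there exists λ ∈ ℝ such that, with F = L - λg, the discrete Euler–Lagrange equation Δ[F_v(t, y⋆(t+1), Δy⋆(t))] - F_x(t, y⋆(t+1), Δy⋆(t)) = 0 holds for all t ∈ {a,…,b-2}. -/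

import Mathlib

/-!
Vary `ystar` only at the interior points `a < t < b`. On this finite-dimensional space of
variations both functionals are `C¹`, and `0` is a local minimum of `J` on the level set of `I`,
so the Lagrange multiplier rule gives `(μ, μ₀) ≠ 0` with `μ • δI + μ₀ • δJ = 0`. Evaluated at the
unit variation at `t + 1`, a first variation is minus the Euler–Lagrange expression at `t`, hence
`μ • EL_g + μ₀ • EL_L = 0`. If `μ₀ = 0`, then `δI = 0`, and summing `EL_g = 0` from `a` shows that
`ystar` is an extremal of `I`; so `μ₀ ≠ 0` and `λ = -μ / μ₀`.
-/

open Finset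

namespace DiscreteVariation

noncomputable def action (F : ℤ → ℝ → ℝ → ℝ) (a b : ℤ) (y : ℤ → ℝ) : ℝ :=
  ∑ t ∈ Ico a b, F t (y (t + 1)) (y (t + 1) - y t)

noncomputable def partialX (F : ℤ → ℝ → ℝ → ℝ) (y : ℤ → ℝ) (t : ℤ) : ℝ :=
  deriv (fun x => F t x (y (t + 1) - y t)) (y (t + 1))

noncomputable def partialV (F : ℤ → ℝ → ℝ → ℝ) (y : ℤ → ℝ) (t : ℤ) : ℝ :=
  deriv (fun v => F t (y (t + 1)) v) (y (t + 1) - y t)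

/-- The left-hand side `Δ[F_v] - F_x` of the discrete Euler–Lagrange equation at `t`. -/
noncomputable def eulerLagrange (F : ℤ → ℝ → ℝ → ℝ) (y : ℤ → ℝ) (t : ℤ) : ℝ :=
  partialV F y (t + 1) - partialV F y t - partialX F y t

def IsExtremal (F : ℤ → ℝ → ℝ → ℝ) (a b : ℤ) (y : ℤ → ℝ) : Prop :=
  ∃ c : ℝ, ∀ t ∈ Ico a b, partialV F y t - ∑ τ ∈ Ico a t, partialX F y τ = c

section Coordinates

variable {a b : ℤ}

noncomputable def interiorCoord (a b t : ℤ) : ({x // x ∈ Ioo a b} → ℝ) →L[ℝ] ℝ :=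
  if h : t ∈ Ioo a b then ContinuousLinearMap.proj ⟨t, h⟩ else 0

lemma interiorCoord_of_notMem {t : ℤ} (ht : t ∉ Ioo a b) : interiorCoord a b t = 0 :=
  dif_neg ht

lemma abs_interiorCoord_apply_le (t : ℤ) (u : {x // x ∈ Ioo a b} → ℝ) :
    |interiorCoord a b t u| ≤ ‖u‖ := by
  unfold interiorCoord
  split_ifs with h
  · exact norm_le_pi_norm u ⟨t, h⟩
  · simp

lemma interiorCoord_single {s : ℤ} (hs : s ∈ Ioo a b) (t : ℤ) :
    interiorCoord a b t (Pi.single ⟨s, hs⟩ 1) = if t = s then 1 else 0 := by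
  unfold interiorCoord
  split_ifs with h hts hts
  · subst hts; simp
  · simp [Subtype.ext_iff, hts]
  · exact absurd (hts ▸ hs) h
  · simp

end Coordinates

noncomputable def interiorVariation (a b : ℤ) (y : ℤ → ℝ) (u : {x // x ∈ Ioo a b} → ℝ) :
    ℤ → ℝ :=
  fun t => y t + interiorCoord a b t u

@[simp]
lemma interiorVariation_zero (a b : ℤ) (y : ℤ → ℝ) : interiorVariation a b y 0 = y := by
  funext t; simp [interiorVariation]

lemma interiorVariation_of_notMem {a b t : ℤ} (y : ℤ → ℝ) (u : {x // x ∈ Ioo a b} → ℝ)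
    (ht : t ∉ Ioo a b) : interiorVariation a b y u t = y t := by
  simp [interiorVariation, interiorCoord_of_notMem ht]

lemma abs_interiorVariation_sub_le (a b t : ℤ) (y : ℤ → ℝ) (u : {x // x ∈ Ioo a b} → ℝ) :
    |interiorVariation a b y u t - y t| ≤ ‖u‖ := by
  simpa [interiorVariation] using abs_interiorCoord_apply_le t u

lemma isLocalMinOn_action_interiorVariation {a b : ℤ} {L g : ℤ → ℝ → ℝ → ℝ} {y : ℤ → ℝ}
    (hmin : ∃ ε > (0 : ℝ), ∀ z : ℤ → ℝ, z a = y a → z b = y b →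
      action g a b z = action g a b y → (∀ t ∈ Icc a b, |z t - y t| < ε) →
      action L a b y ≤ action L a b z) :
    IsLocalMinOn (fun u => action L a b (interiorVariation a b y u))
      {u | action g a b (interiorVariation a b y u) = action g a b (interiorVariation a b y 0)}
      0 := by
  obtain ⟨ε, hε, hmin⟩ := hmin
  refine eventually_nhdsWithin_iff.mpr ?_
  filter_upwards [Metric.ball_mem_nhds 0 hε] with u hu hconstr
  simp only [interiorVariation_zero] at hconstr ⊢
  refine hmin _ (interiorVariation_of_notMem y u (by simp))
    (interiorVariation_of_notMem y u (by simp)) hconstr fun t _ => ?_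
  calc |interiorVariation a b y u t - y t| ≤ ‖u‖ := abs_interiorVariation_sub_le a b t y u
    _ < ε := by simpa using hu

lemma hasStrictFDerivAt_interiorVariation_apply (a b t : ℤ) (y : ℤ → ℝ)
    (u : {x // x ∈ Ioo a b} → ℝ) :
    HasStrictFDerivAt (fun u => interiorVariation a b y u t) (interiorCoord a b t) u :=
  (interiorCoord a b t).hasStrictFDerivAt.const_add (y t)

lemma fderiv_apply_eq_partials {f : ℝ → ℝ → ℝ} {x v : ℝ}
    (hf : DifferentiableAt ℝ (fun p : ℝ × ℝ => f p.1 p.2) (x, v)) (α β : ℝ) :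
    fderiv ℝ (fun p : ℝ × ℝ => f p.1 p.2) (x, v) (α, β) =
      α * deriv (fun x => f x v) x + β * deriv (fun v => f x v) v := by
  have hx := (hf.hasFDerivAt.comp_hasDerivAt x
    ((hasDerivAt_id x).prodMk (hasDerivAt_const x v))).deriv
  have hv := (hf.hasFDerivAt.comp_hasDerivAt v
    ((hasDerivAt_const v x).prodMk (hasDerivAt_id v))).deriv
  have hαβ : ((α, β) : ℝ × ℝ) = α • ((1 : ℝ), (0 : ℝ)) + β • ((0 : ℝ), (1 : ℝ)) := by simp
  simp only [Function.comp_def, id] at hx hv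
  rw [hαβ, map_add, map_smul, map_smul, ← hx, ← hv, smul_eq_mul, smul_eq_mul]

lemma hasStrictFDerivAt_comp_partials {E : Type*} [NormedAddCommGroup E] [NormedSpace ℝ E]
    {f : ℝ → ℝ → ℝ} (hf : ContDiff ℝ 1 (fun p : ℝ × ℝ => f p.1 p.2)) {φ ψ : E → ℝ}
    {φ' ψ' : E →L[ℝ] ℝ} {u : E} (hφ : HasStrictFDerivAt φ φ' u) (hψ : HasStrictFDerivAt ψ ψ' u) :
    HasStrictFDerivAt (fun u => f (φ u) (ψ u))
      (deriv (fun x => f x (ψ u)) (φ u) • φ' + deriv (fun v => f (φ u) v) (ψ u) • ψ') u := by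
  have hf' := hf.contDiffAt.hasStrictFDerivAt (x := (φ u, ψ u)) one_ne_zero
  refine (hf'.comp u (hφ.prodMk hψ)).congr_fderiv ?_
  ext w
  simp [fderiv_apply_eq_partials (hf.differentiable one_ne_zero).differentiableAt, mul_comm]

noncomputable def firstVariation (F : ℤ → ℝ → ℝ → ℝ) (a b : ℤ) (y : ℤ → ℝ) :
    ({x // x ∈ Ioo a b} → ℝ) →L[ℝ] ℝ :=
  ∑ t ∈ Ico a b, (partialX F y t • interiorCoord a b (t + 1) +
    partialV F y t • (interiorCoord a b (t + 1) - interiorCoord a b t))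

lemma hasStrictFDerivAt_action_interiorVariation {F : ℤ → ℝ → ℝ → ℝ} {a b : ℤ} (y : ℤ → ℝ)
    (hF : ∀ t ∈ Ico a b, ContDiff ℝ 1 (fun p : ℝ × ℝ => F t p.1 p.2)) :
    HasStrictFDerivAt (fun u => action F a b (interiorVariation a b y u))
      (firstVariation F a b y) 0 := by
  refine HasStrictFDerivAt.fun_sum fun t ht => ?_
  simpa [partialX, partialV] using hasStrictFDerivAt_comp_partials (hF t ht)
    (hasStrictFDerivAt_interiorVariation_apply a b (t + 1) y 0)
    ((hasStrictFDerivAt_interiorVariation_apply a b (t + 1) y 0).sub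
      (hasStrictFDerivAt_interiorVariation_apply a b t y 0))

lemma firstVariation_single {F : ℤ → ℝ → ℝ → ℝ} {a b : ℤ} {y : ℤ → ℝ} {t : ℤ}
    (ht : t + 1 ∈ Ioo a b) :
    firstVariation F a b y (Pi.single ⟨t + 1, ht⟩ 1) = -eulerLagrange F y t := by
  have ht₀ : t ∈ Ico a b := by simp at ht ⊢; omega
  have ht₁ : t + 1 ∈ Ico a b := by simp at ht ⊢; omega
  simp only [firstVariation, sum_add_distrib, add_apply, _root_.sum_apply, smul_apply,
    interiorCoord_single, add_left_inj, smul_eq_mul, mul_ite, mul_one, mul_zero, sum_ite_eq', ht₀,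
    ↓reduceIte, sub_apply, mul_sub, sum_sub_distrib, ht₁, eulerLagrange]
  ring

lemma sub_sum_Ico_eq_of_forall_eq_add {M : Type*} [AddCommGroup M] {f d : ℤ → M} {a b : ℤ}
    (h : ∀ t ∈ Ico a (b - 1), f (t + 1) = f t + d t) :
    ∀ t ∈ Ico a b, f t - ∑ τ ∈ Ico a t, d τ = f a := by
  intro t ht
  obtain ⟨hat, htb⟩ := mem_Ico.mp ht
  induction t, hat using Int.leInduction with
  | base => simp
  | succ n han ih =>
    rw [← insert_Ico_right_eq_Ico_add_one han, sum_insert right_notMem_Ico, h n (by simp; omega),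
      ← ih (by simp; omega) (by omega)]
    abel

lemma isExtremal_of_firstVariation_eq_zero {F : ℤ → ℝ → ℝ → ℝ} {a b : ℤ} {y : ℤ → ℝ}
    (h : firstVariation F a b y = 0) : IsExtremal F a b y := by
  refine ⟨partialV F y a, sub_sum_Ico_eq_of_forall_eq_add fun t ht => ?_⟩
  have hs : t + 1 ∈ Ioo a b := by simp at ht ⊢; omega
  have hEL : eulerLagrange F y t = 0 := by
    simpa [h] using (firstVariation_single (F := F) (y := y) hs).symm
  rw [eulerLagrange] at hEL
  linear_combination hEL

end DiscreteVariation

open DiscreteVariation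

theorem isoperimetric_necessary_condition_Z_general
    (a b : ℤ) (l ya yb : ℝ)
    (L g : ℤ → ℝ → ℝ → ℝ)
    (hL : ∀ t ∈ Finset.Ico a b, ContDiff ℝ 1 (fun p : ℝ × ℝ => L t p.1 p.2))
    (hg : ∀ t ∈ Finset.Ico a b, ContDiff ℝ 1 (fun p : ℝ × ℝ => g t p.1 p.2))
    (ystar : ℤ → ℝ)
    (hba : ystar a = ya) (hbb : ystar b = yb)
    (hI : ∑ t ∈ Finset.Ico a b, g t (ystar (t + 1)) (ystar (t + 1) - ystar t) = l)
    (hmin : ∃ ε > (0 : ℝ), ∀ y : ℤ → ℝ,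
      y a = ya → y b = yb →
      (∑ t ∈ Finset.Ico a b, g t (y (t + 1)) (y (t + 1) - y t)) = l →
      (∀ t ∈ Finset.Icc a b, |y t - ystar t| < ε) →
      (∑ t ∈ Finset.Ico a b, L t (ystar (t + 1)) (ystar (t + 1) - ystar t)) ≤
        ∑ t ∈ Finset.Ico a b, L t (y (t + 1)) (y (t + 1) - y t))
    (hnotext : ¬ ∃ c : ℝ, ∀ t ∈ Finset.Ico a b,
      deriv (fun v => g t (ystar (t + 1)) v) (ystar (t + 1) - ystar t) -
        (∑ τ ∈ Finset.Ico a t,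
          deriv (fun x => g τ x (ystar (τ + 1) - ystar τ)) (ystar (τ + 1))) = c) :
    ∃ lam : ℝ, ∀ t ∈ Finset.Ico a (b - 1),
      ((deriv (fun v => L (t + 1) (ystar (t + 2)) v) (ystar (t + 2) - ystar (t + 1)) -
          lam * deriv (fun v => g (t + 1) (ystar (t + 2)) v) (ystar (t + 2) - ystar (t + 1))) -
        (deriv (fun v => L t (ystar (t + 1)) v) (ystar (t + 1) - ystar t) -
          lam * deriv (fun v => g t (ystar (t + 1)) v) (ystar (t + 1) - ystar t))) -
      (deriv (fun x => L t x (ystar (t + 1) - ystar t)) (ystar (t + 1)) -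
        lam * deriv (fun x => g t x (ystar (t + 1) - ystar t)) (ystar (t + 1))) = 0 := by
  subst hI hba hbb
  obtain ⟨μ, μ₀, hne, hcomb⟩ :=
    IsLocalExtrOn.exists_multipliers_of_hasStrictFDerivAt_1d
      (Or.inl (isLocalMinOn_action_interiorVariation hmin))
      (hasStrictFDerivAt_action_interiorVariation ystar hg)
      (hasStrictFDerivAt_action_interiorVariation ystar hL)
  have hμ₀ : μ₀ ≠ 0 := by
    rintro rfl
    have hμ : μ ≠ 0 := by simpa using hne
    exact hnotext (isExtremal_of_firstVariation_eq_zero (by simpa [hμ] using hcomb))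
  refine ⟨-μ / μ₀, fun t ht => ?_⟩
  have hs : t + 1 ∈ Ioo a b := by simp at ht ⊢; omega
  have hEL := DFunLike.congr_fun hcomb (Pi.single ⟨t + 1, hs⟩ 1)
  simp only [add_apply, smul_apply, firstVariation_single, zero_apply, smul_eq_mul,
    eulerLagrange, partialV, partialX, show t + 1 + 1 = t + 2 by ring] at hEL
  field_simp
  linear_combination -hEL

theorem isoperimetric_necessary_condition_Z
    (a b : ℤ) (hab : a < b) (l ya yb : ℝ)
    (L g : ℤ → ℝ → ℝ → ℝ)
    (hL : ∀ t ∈ Finset.Ico a b, ContDiff ℝ 1 (fun p : ℝ × ℝ => L t p.1 p.2))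
    (hg : ∀ t ∈ Finset.Ico a b, ContDiff ℝ 1 (fun p : ℝ × ℝ => g t p.1 p.2))
    (ystar : ℤ → ℝ)
    (hba : ystar a = ya) (hbb : ystar b = yb)
    (hI : ∑ t ∈ Finset.Ico a b, g t (ystar (t + 1)) (ystar (t + 1) - ystar t) = l)
    (hmin : ∃ ε > (0 : ℝ), ∀ y : ℤ → ℝ,
      y a = ya → y b = yb →
      (∑ t ∈ Finset.Ico a b, g t (y (t + 1)) (y (t + 1) - y t)) = l →
      (∀ t ∈ Finset.Icc a b, |y t - ystar t| < ε) →
      (∑ t ∈ Finset.Ico a b, L t (ystar (t + 1)) (ystar (t + 1) - ystar t)) ≤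
        ∑ t ∈ Finset.Ico a b, L t (y (t + 1)) (y (t + 1) - y t))
    (hnotext : ¬ ∃ c : ℝ, ∀ t ∈ Finset.Ico a b,
      deriv (fun v => g t (ystar (t + 1)) v) (ystar (t + 1) - ystar t) -
        (∑ τ ∈ Finset.Ico a t,
          deriv (fun x => g τ x (ystar (τ + 1) - ystar τ)) (ystar (τ + 1))) = c) :
    ∃ lam : ℝ, ∀ t ∈ Finset.Ico a (b - 1),
      ((deriv (fun v => L (t + 1) (ystar (t + 2)) v) (ystar (t + 2) - ystar (t + 1)) -
          lam * deriv (fun v => g (t + 1) (ystar (t + 2)) v) (ystar (t + 2) - ystar (t + 1))) -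
        (deriv (fun v => L t (ystar (t + 1)) v) (ystar (t + 1) - ystar t) -
          lam * deriv (fun v => g t (ystar (t + 1)) v) (ystar (t + 1) - ystar t))) -
      (deriv (fun x => L t x (ystar (t + 1) - ystar t)) (ystar (t + 1)) -
        lam * deriv (fun x => g t x (ystar (t + 1) - ystar t)) (ystar (t + 1))) = 0 :=
  isoperimetric_necessary_condition_Z_general a b l ya yb L g hL hg ystar hba hbb hI hmin hnotext
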